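/- Suppose interferers are located so that, for each positive integer t, there are at most 8t interferers at distance at least (4t−1)d from a receiver, each transmitting with power P₀ d^α, and the channel gain at distance r is r^{−α} with α > 2. Then the total interference is bounded above by the constant P₀ ∑_{t=1}^∞ 8t(4t−1)^{−α} < ∞, independent of d. -/

import Mathlib

/-!
Each interferer in ring `t` contributes at most `P₀ (4t-1)^{-α}`, because the factor `d^α` of
its power cancels against the `d^{-α}` in the gain at distance `(4t-1)d`. Grouping a finite set
of interferers by ring and using that ring `t` holds at most `8t` of them bounds every partial
sum of the interference by the ring series, which converges for `α > 2` since its terms are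
`O(t^{1-α})`.
-/

open Finset

theorem Finset.card_filter_le_ncard_preimage {ι κ : Type*} [DecidableEq κ] (s : Finset ι)
    (k : ι → κ) (t : κ) (hfin : (k ⁻¹' {t}).Finite) :
    #{i ∈ s | k i = t} ≤ (k ⁻¹' {t}).ncard := by
  rw [← Set.ncard_coe_finset]
  exact Set.ncard_le_ncard (fun i hi => (Finset.mem_filter.1 hi).2) hfin

theorem tsum_le_tsum_of_fiber_ncard_le {ι κ : Type*} {f : ι → ℝ} {k : ι → κ} {b : κ → ℝ}
    {N : κ → ℕ} (hb : ∀ t, 0 ≤ b t) (hf : ∀ i, f i ≤ b (k i))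
    (hfin : ∀ t, (k ⁻¹' {t}).Finite) (hN : ∀ t, (k ⁻¹' {t}).ncard ≤ N t)
    (hs : Summable fun t => N t * b t) :
    ∑' i, f i ≤ ∑' t, N t * b t := by
  classical
  have hNb : ∀ t, 0 ≤ (N t : ℝ) * b t := fun t => mul_nonneg (N t).cast_nonneg (hb t)
  refine tsum_le_of_sum_le' (tsum_nonneg hNb) fun s => ?_
  calc ∑ i ∈ s, f i
      ≤ ∑ i ∈ s, b (k i) := sum_le_sum fun i _ => hf i
    _ = ∑ t ∈ s.image k, (#{i ∈ s | k i = t} : ℝ) * b t := by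
      rw [sum_comp]; simp only [nsmul_eq_mul]
    _ ≤ ∑ t ∈ s.image k, (N t : ℝ) * b t := by
      refine sum_le_sum fun t _ => mul_le_mul_of_nonneg_right ?_ (hb t)
      exact_mod_cast (s.card_filter_le_ncard_preimage k t (hfin t)).trans (hN t)
    _ ≤ ∑' t, N t * b t := hs.sum_le_tsum _ fun t _ => hNb t

theorem Real.summable_nat_add_one_mul_rpow_neg {α : ℝ} (hα : 2 < α) :
    Summable fun n : ℕ => ((n : ℝ) + 1) * (4 * ((n : ℝ) + 1) - 1) ^ (-α) := by
  have hpow : Summable fun n : ℕ => ((n : ℝ) + 1) ^ (1 - α) := by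
    have := (summable_nat_add_iff 1).2 (Real.summable_nat_rpow.2 (by linarith : 1 - α < -1))
    simpa only [Nat.cast_add, Nat.cast_one] using this
  refine hpow.of_nonneg_of_le (fun n => ?_) fun n => ?_
  · have : (0 : ℝ) ≤ 4 * ((n : ℝ) + 1) - 1 := by linarith [n.cast_nonneg (α := ℝ)]
    positivity
  · have hn : (0 : ℝ) < (n : ℝ) + 1 := by positivity
    calc ((n : ℝ) + 1) * (4 * ((n : ℝ) + 1) - 1) ^ (-α)
        ≤ ((n : ℝ) + 1) * ((n : ℝ) + 1) ^ (-α) := by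
          refine mul_le_mul_of_nonneg_left ?_ hn.le
          exact Real.rpow_le_rpow_of_nonpos hn (by linarith) (by linarith)
      _ = ((n : ℝ) + 1) ^ (1 - α) := by
          rw [sub_eq_add_neg, Real.rpow_add hn, Real.rpow_one]

theorem Real.rpow_mul_rpow_neg_le_of_mul_le {α c d r : ℝ} (hα : 0 ≤ α) (hc : 0 < c)
    (hd : 0 < d) (hr : c * d ≤ r) :
    d ^ α * r ^ (-α) ≤ c ^ (-α) :=
  calc d ^ α * r ^ (-α)
      ≤ d ^ α * (c * d) ^ (-α) := by
        refine mul_le_mul_of_nonneg_left ?_ (by positivity)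
        exact Real.rpow_le_rpow_of_nonpos (by positivity) hr (by linarith)
    _ = c ^ (-α) := by
        rw [Real.mul_rpow hc.le hd.le, Real.rpow_neg hd.le,
          mul_left_comm, mul_inv_cancel₀ (by positivity), mul_one]

/-- Interference bound for the 25-TDMA scheme: if for every `t ≥ 1` there are
at most `8t` interferers in ring `t`, each at distance at least `(4t-1)d` and
transmitting with power `P₀ d^α`, and the channel gain at distance `r` is
`r^{-α}` with `α > 2`, then the total interference is bounded by the constant
`P₀ ∑_{t=1}^∞ 8t (4t-1)^{-α}`, which is finite, independently of `d`. -/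
theorem interference_bound (α P₀ d : ℝ) (hα : 2 < α) (hP : 0 < P₀) (hd : 0 < d)
    {ι : Type*} (ring : ι → ℕ) (r : ι → ℝ)
    (hring : ∀ i, 1 ≤ ring i)
    (hr : ∀ i, (4 * (ring i : ℝ) - 1) * d ≤ r i)
    (hcard : ∀ t : ℕ, 1 ≤ t → {i : ι | ring i = t}.Finite ∧
      {i : ι | ring i = t}.ncard ≤ 8 * t) :
    Summable (fun t : ℕ => 8 * ((t : ℝ) + 1) * (4 * ((t : ℝ) + 1) - 1) ^ (-α)) ∧
      (∑' i : ι, P₀ * d ^ α * (r i) ^ (-α))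
        ≤ P₀ * ∑' t : ℕ, 8 * ((t : ℝ) + 1) * (4 * ((t : ℝ) + 1) - 1) ^ (-α) := by
  have hsum := Real.summable_nat_add_one_mul_rpow_neg hα
  refine ⟨by simpa only [mul_assoc] using hsum.mul_left 8, ?_⟩
  -- Index rings from `0` via `ring - 1`: at index `0` the weight `(4·0 - 1)^{-α}` would be the
  -- `rpow` of a negative base, which need not be nonnegative.
  have hfiber : ∀ t : ℕ, (fun i => ring i - 1) ⁻¹' {t} = {i | ring i = t + 1} := by
    intro t; ext i; simp only [Set.mem_preimage, Set.mem_singleton_iff, Set.mem_ofPred_eq]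
    have := hring i; omega
  have hweight : ∀ t : ℕ, 0 ≤ P₀ * (4 * ((t : ℝ) + 1) - 1) ^ (-α) := fun t => by
    have : (0 : ℝ) ≤ 4 * ((t : ℝ) + 1) - 1 := by linarith [t.cast_nonneg (α := ℝ)]
    positivity
  have hterm : ∀ i, P₀ * d ^ α * r i ^ (-α)
      ≤ P₀ * (4 * (((ring i - 1 : ℕ) : ℝ) + 1) - 1) ^ (-α) := fun i => by
    have hcast : ((ring i - 1 : ℕ) : ℝ) + 1 = ring i := by
      rw [Nat.cast_sub (hring i)]; ring
    have hpos : (0 : ℝ) < 4 * (ring i : ℝ) - 1 := by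
      linarith [(Nat.one_le_cast (α := ℝ)).2 (hring i)]
    simpa only [hcast, mul_assoc] using mul_le_mul_of_nonneg_left
      (Real.rpow_mul_rpow_neg_le_of_mul_le (by linarith) hpos hd (hr i)) hP.le
  have hbound := tsum_le_tsum_of_fiber_ncard_le (N := fun t => 8 * (t + 1)) hweight hterm
    (fun t => hfiber t ▸ (hcard (t + 1) t.succ_pos).1)
    (fun t => hfiber t ▸ (hcard (t + 1) t.succ_pos).2)
    (by simpa only [Nat.cast_mul, Nat.cast_ofNat, Nat.cast_succ, mul_mul_mul_comm]
      using hsum.mul_left (8 * P₀))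
  refine hbound.trans_eq ?_
  rw [← tsum_mul_left]
  congr 1; ext t; push_cast; ring
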